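/- Let π̂ be an optimal plan minimizing Φ over Π(μ¹,…,μ^N), and let ν̂ be an optimal barycenter, i.e. a minimizer of Ψ over probability measures on ℝ^d. Then Φ(π̂) = Ψ(ν̂). -/

import Mathlib

/-!
The weighted mean map `M_λ` links the two problems. For a configuration `x`, the pairwise cost
`∑_{s<t} λ_s λ_t ‖x_s - x_t‖²` equals the weighted variance `∑ λ_i ‖x_i - M_λ x‖²`, and this is the
minimum over `y` of `∑ λ_i ‖x_i - y‖²`. Pushing `π̂` forward by `M_λ` therefore gives a measure `ν`
with `Ψ(ν) ≤ Φ(π̂)`. Conversely, couplings `γ_i` of `μ^i` with `ν̂` can be glued along their common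
marginal `ν̂` (disintegrate each with respect to `ν̂` and make the coordinates conditionally
independent); the glued measure is a multi-marginal plan whose cost is at most
`∑ λ_i ∫ ‖x - y‖² dγ_i`, so `Φ(π̂) ≤ Ψ(ν̂)`.
-/

open MeasureTheory
open scoped ENNReal

noncomputable section

/-- Points of the `d`-dimensional Euclidean space. -/
abbrev Pt (d : ℕ) := EuclideanSpace ℝ (Fin d)

/-- A measure is finitely supported if it vanishes outside a finite set. -/
def FinitelySupported {α : Type*} [MeasurableSpace α] (μ : Measure α) : Prop :=
  ∃ s : Finset α, μ ((s : Set α)ᶜ) = 0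

/-- `λ` lies in the open probability simplex. -/
def InSimplex {N : ℕ} (l : Fin N → ℝ) : Prop :=
  (∀ i, 0 < l i) ∧ ∑ i, l i = 1

/-- `π` is a multi-marginal transport plan with marginals `μ i`. -/
def IsPlan {d N : ℕ} (μ : Fin N → Measure (Pt d)) (π : Measure (Fin N → Pt d)) : Prop :=
  IsProbabilityMeasure π ∧ ∀ i, π.map (fun x => x i) = μ i

/-- The multi-marginal optimal transport cost `Φ(π)`. -/
def MOT {d N : ℕ} (l : Fin N → ℝ) (π : Measure (Fin N → Pt d)) : ℝ≥0∞ :=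
  ∫⁻ x, ∑ s : Fin N, ∑ t : Fin N,
    (if s < t then ENNReal.ofReal (l s * l t * ‖x s - x t‖ ^ 2) else 0) ∂π

/-- `π` is a coupling of `μ` and `ν`. -/
def IsCoupling {α : Type*} [MeasurableSpace α] (μ ν : Measure α) (π : Measure (α × α)) : Prop :=
  IsProbabilityMeasure π ∧ π.map Prod.fst = μ ∧ π.map Prod.snd = ν

/-- The squared Wasserstein-2 distance: the optimal squared-Euclidean transport cost
over all couplings. -/
def W2sq {d : ℕ} (μ ν : Measure (Pt d)) : ℝ≥0∞ :=
  sInf { c : ℝ≥0∞ | ∃ π : Measure (Pt d × Pt d), IsCoupling μ ν π ∧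
    c = ∫⁻ p, ENNReal.ofReal (‖p.1 - p.2‖ ^ 2) ∂π }

/-- The barycenter objective `Ψ(ν) = ∑ i λ i * W₂²(μ i, ν)`. -/
def Psi {d N : ℕ} (l : Fin N → ℝ) (μ : Fin N → Measure (Pt d)) (ν : Measure (Pt d)) : ℝ≥0∞ :=
  ∑ i, ENNReal.ofReal (l i) * W2sq (μ i) ν

/-- The `λ`-weighted mean map `M_λ`. -/
def wmean {d N : ℕ} (l : Fin N → ℝ) (x : Fin N → Pt d) : Pt d :=
  ∑ i, l i • x i

/-- The support-as-atoms of a measure. -/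
def msupport {α : Type*} [MeasurableSpace α] (μ : Measure α) : Set α :=
  {x | μ {x} ≠ 0}

open ProbabilityTheory

namespace ProbabilityTheory.Kernel

variable {ι α : Type*} [Fintype ι] {mα : MeasurableSpace α} {X : ι → Type*}
  [∀ i, MeasurableSpace (X i)]

noncomputable def pi (κ : ∀ i, Kernel α (X i)) [∀ i, IsMarkovKernel (κ i)] :
    Kernel α (∀ i, X i) where
  toFun a := Measure.pi fun i => κ i a
  measurable' := by
    refine .measure_of_isPiSystem_of_isProbabilityMeasure generateFrom_pi.symm isPiSystem_pi ?_
    rintro _ ⟨t, ht, rfl⟩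
    simp only [Measure.pi_pi]
    exact Finset.measurable_prod _ fun i _ => κ i |>.measurable_coe (ht i (Set.mem_univ i))

variable (κ : ∀ i, Kernel α (X i)) [∀ i, IsMarkovKernel (κ i)]

lemma pi_apply (a : α) : pi κ a = Measure.pi fun i => κ i a := rfl

instance : IsMarkovKernel (pi κ) := ⟨fun a => by rw [pi_apply]; infer_instance⟩

lemma map_pi_eval [DecidableEq ι] (i : ι) : (pi κ).map (Function.eval i) = κ i := by
  ext1 a
  rw [map_apply _ (measurable_pi_apply i), pi_apply, Measure.pi_map_eval]
  simp

end ProbabilityTheory.Kernel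

theorem MeasureTheory.Measure.exists_gluing {ι X Y : Type*} [Fintype ι]
    [MeasurableSpace X] [StandardBorelSpace X] [Nonempty X] [MeasurableSpace Y]
    (ν : Measure Y) [IsProbabilityMeasure ν] (γ : ι → Measure (X × Y))
    [∀ i, IsFiniteMeasure (γ i)] (hγ : ∀ i, (γ i).snd = ν) :
    ∃ ξ : Measure ((ι → X) × Y), IsProbabilityMeasure ξ ∧
      ∀ i, ξ.map (fun p => (p.1 i, p.2)) = γ i := by
  classical
  let κ i := ((γ i).map Prod.swap).condKernel
  refine ⟨(ν ⊗ₘ Kernel.pi κ).map Prod.swap, isProbabilityMeasure_map (by fun_prop),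
    fun i => ?_⟩
  have hdis : ν ⊗ₘ κ i = (γ i).map Prod.swap := by
    rw [← hγ i, ← Measure.fst_map_swap]; exact Measure.disintegrate _ _
  calc ((ν ⊗ₘ Kernel.pi κ).map Prod.swap).map (fun p => (p.1 i, p.2))
      = ((ν ⊗ₘ Kernel.pi κ).map (Prod.map id (Function.eval i))).map Prod.swap := by
        rw [Measure.map_map (by fun_prop) (by fun_prop),
          Measure.map_map (by fun_prop) (by fun_prop)]
        rfl
    _ = γ i := by
        rw [← Measure.compProd_map (measurable_pi_apply i), Kernel.map_pi_eval, hdis,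
          Measure.map_map measurable_swap measurable_swap, Prod.swap_swap_eq, Measure.map_id]

open scoped RealInnerProductSpace

section WeightedMean

variable {ι E : Type*} [Fintype ι] [NormedAddCommGroup E] [InnerProductSpace ℝ E] {w : ι → ℝ}

theorem sum_mul_norm_sub_sq_eq (hw : ∑ i, w i = 1) (x : ι → E) (y : E) :
    ∑ i, w i * ‖x i - y‖ ^ 2
      = ∑ i, w i * ‖x i - ∑ j, w j • x j‖ ^ 2 + ‖∑ j, w j • x j - y‖ ^ 2 := by
  set M := ∑ j, w j • x j
  have hcentered : ∑ i, w i • (x i - M) = 0 := by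
    simp only [smul_sub, Finset.sum_sub_distrib, ← Finset.sum_smul, hw, one_smul, M, sub_self]
  have hcross : ∑ i, w i * ⟪x i - M, M - y⟫ = 0 := by
    simp only [← real_inner_smul_left, ← sum_inner, hcentered, inner_zero_left]
  calc ∑ i, w i * ‖x i - y‖ ^ 2
      = ∑ i, (w i * ‖x i - M‖ ^ 2 + 2 * (w i * ⟪x i - M, M - y⟫) + w i * ‖M - y‖ ^ 2) := by
        refine Finset.sum_congr rfl fun i _ => ?_
        rw [← sub_add_sub_cancel (x i) M y, norm_add_sq_real]
        ring
    _ = ∑ i, w i * ‖x i - M‖ ^ 2 + ‖M - y‖ ^ 2 := by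
        rw [Finset.sum_add_distrib, Finset.sum_add_distrib, ← Finset.mul_sum, hcross,
          ← Finset.sum_mul, hw]
        ring

theorem sum_sum_mul_mul_norm_sub_sq (hw : ∑ i, w i = 1) (x : ι → E) :
    ∑ s, ∑ t, w s * w t * ‖x s - x t‖ ^ 2 = 2 * ∑ i, w i * ‖x i - ∑ j, w j • x j‖ ^ 2 := by
  set M := ∑ j, w j • x j
  calc ∑ s, ∑ t, w s * w t * ‖x s - x t‖ ^ 2
      = ∑ s, w s * (∑ i, w i * ‖x i - M‖ ^ 2 + ‖M - x s‖ ^ 2) := by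
        refine Finset.sum_congr rfl fun s _ => ?_
        rw [← sum_mul_norm_sub_sq_eq hw x (x s), Finset.mul_sum]
        exact Finset.sum_congr rfl fun t _ => by rw [norm_sub_rev]; ring
    _ = 2 * ∑ i, w i * ‖x i - M‖ ^ 2 := by
        simp only [mul_add, Finset.sum_add_distrib, ← Finset.sum_mul, hw, one_mul,
          norm_sub_rev M]
        ring

end WeightedMean

theorem Finset.sum_sum_ite_lt_add {ι M : Type*} [Fintype ι] [LinearOrder ι] [AddCommMonoid M]
    (c : ι → ι → M) (hsymm : ∀ s t, c s t = c t s) (hdiag : ∀ s, c s s = 0) :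
    ∑ s, ∑ t, (if s < t then c s t else 0) + ∑ s, ∑ t, (if s < t then c s t else 0)
      = ∑ s, ∑ t, c s t := by
  conv_lhs => enter [2]; rw [Finset.sum_comm]
  rw [← Finset.sum_add_distrib]
  refine Finset.sum_congr rfl fun s _ => ?_
  rw [← Finset.sum_add_distrib]
  refine Finset.sum_congr rfl fun t _ => ?_
  rcases lt_trichotomy s t with h | rfl | h
  · simp [h, h.not_gt]
  · simp [hdiag]
  · simp [h, h.not_gt, hsymm s t]

theorem ENNReal.ofReal_sum_mul {ι : Type*} (s : Finset ι) {w f : ι → ℝ}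
    (hw : ∀ i ∈ s, 0 ≤ w i) (hf : ∀ i ∈ s, 0 ≤ f i) :
    ENNReal.ofReal (∑ i ∈ s, w i * f i) = ∑ i ∈ s, ENNReal.ofReal (w i) * ENNReal.ofReal (f i) := by
  rw [ENNReal.ofReal_sum_of_nonneg fun i hi => mul_nonneg (hw i hi) (hf i hi)]
  exact Finset.sum_congr rfl fun i hi => ENNReal.ofReal_mul (hw i hi)

section Barycenter

variable {d N : ℕ} {l : Fin N → ℝ}

def motCost (l : Fin N → ℝ) (x : Fin N → Pt d) : ℝ≥0∞ :=
  ∑ s : Fin N, ∑ t : Fin N, (if s < t then ENNReal.ofReal (l s * l t * ‖x s - x t‖ ^ 2) else 0)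

theorem MOT_eq_lintegral_motCost (π : Measure (Fin N → Pt d)) :
    MOT l π = ∫⁻ x, motCost l x ∂π := rfl

@[fun_prop]
theorem measurable_wmean : Measurable (wmean (d := d) l) := by
  unfold wmean; fun_prop

theorem motCost_eq (hl : InSimplex l) (x : Fin N → Pt d) :
    motCost l x = ∑ i, ENNReal.ofReal (l i) * ENNReal.ofReal (‖x i - wmean l x‖ ^ 2) := by
  have hpair : ∑ s, ∑ t, (if s < t then l s * l t * ‖x s - x t‖ ^ 2 else 0)
      = ∑ i, l i * ‖x i - wmean l x‖ ^ 2 := by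
    have h := Finset.sum_sum_ite_lt_add (fun s t => l s * l t * ‖x s - x t‖ ^ 2)
      (fun s t => by rw [norm_sub_rev]; ring) (fun s => by simp)
    rw [sum_sum_mul_mul_norm_sub_sq hl.2] at h
    unfold wmean
    linarith
  have hnonneg : ∀ s t, 0 ≤ (if s < t then l s * l t * ‖x s - x t‖ ^ 2 else 0) := by
    intro s t
    have := hl.1 s; have := hl.1 t
    split_ifs <;> positivity
  calc motCost l x
      = ∑ s, ∑ t, ENNReal.ofReal (if s < t then l s * l t * ‖x s - x t‖ ^ 2 else 0) := by
        simp only [motCost, apply_ite ENNReal.ofReal, ENNReal.ofReal_zero]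
    _ = ENNReal.ofReal (∑ i, l i * ‖x i - wmean l x‖ ^ 2) := by
        rw [← hpair,
          ENNReal.ofReal_sum_of_nonneg fun s _ => Finset.sum_nonneg fun t _ => hnonneg s t]
        exact Finset.sum_congr rfl fun s _ =>
          (ENNReal.ofReal_sum_of_nonneg fun t _ => hnonneg s t).symm
    _ = _ := ENNReal.ofReal_sum_mul _ (fun i _ => (hl.1 i).le) (fun i _ => sq_nonneg _)

theorem motCost_le (hl : InSimplex l) (x : Fin N → Pt d) (y : Pt d) :
    motCost l x ≤ ∑ i, ENNReal.ofReal (l i) * ENNReal.ofReal (‖x i - y‖ ^ 2) := by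
  rw [motCost_eq hl, ← ENNReal.ofReal_sum_mul _ (fun i _ => (hl.1 i).le) (fun i _ => sq_nonneg _),
    ← ENNReal.ofReal_sum_mul _ (fun i _ => (hl.1 i).le) (fun i _ => sq_nonneg _)]
  refine ENNReal.ofReal_le_ofReal ?_
  rw [sum_mul_norm_sub_sq_eq hl.2 x y]
  exact le_add_of_nonneg_right (sq_nonneg _)

end Barycenter

section Transport

variable {d N : ℕ}

theorem W2sq_le_of_isCoupling {μ ν : Measure (Pt d)} {γ : Measure (Pt d × Pt d)}
    (hγ : IsCoupling μ ν γ) : W2sq μ ν ≤ ∫⁻ p, ENNReal.ofReal (‖p.1 - p.2‖ ^ 2) ∂γ :=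
  sInf_le ⟨γ, hγ, rfl⟩

theorem exists_isCoupling_lintegral_lt {μ ν : Measure (Pt d)} {c : ℝ≥0∞} (hc : W2sq μ ν < c) :
    ∃ γ, IsCoupling μ ν γ ∧ ∫⁻ p, ENNReal.ofReal (‖p.1 - p.2‖ ^ 2) ∂γ < c := by
  obtain ⟨_, ⟨γ, hγ, rfl⟩, hlt⟩ := sInf_lt_iff.1 hc
  exact ⟨γ, hγ, hlt⟩

variable {μ : Fin N → Measure (Pt d)} {l : Fin N → ℝ}

theorem Psi_map_wmean_le_MOT (hl : InSimplex l) {π : Measure (Fin N → Pt d)}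
    (hπ : IsPlan μ π) : Psi l μ (π.map (wmean l)) ≤ MOT l π := by
  have := hπ.1
  have hcoupling : ∀ i, IsCoupling (μ i) (π.map (wmean l)) (π.map fun x => (x i, wmean l x)) :=
    fun i => ⟨Measure.isProbabilityMeasure_map (by fun_prop),
      by rw [Measure.map_map (by fun_prop) (by fun_prop)]; exact hπ.2 i,
      by rw [Measure.map_map (by fun_prop) (by fun_prop)]; rfl⟩
  calc Psi l μ (π.map (wmean l))
      ≤ ∑ i, ENNReal.ofReal (l i) * ∫⁻ x, ENNReal.ofReal (‖x i - wmean l x‖ ^ 2) ∂π := by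
        refine Finset.sum_le_sum fun i _ => mul_le_mul_right ?_ _
        refine (W2sq_le_of_isCoupling (hcoupling i)).trans_eq ?_
        rw [lintegral_map (by fun_prop) (by fun_prop)]
    _ = MOT l π := by
        simp only [MOT_eq_lintegral_motCost, motCost_eq hl]
        rw [lintegral_finsetSum _ fun i _ => by fun_prop]
        simp only [lintegral_const_mul' _ _ ENNReal.ofReal_ne_top]

theorem exists_isPlan_MOT_le (hl : InSimplex l) {ν : Measure (Pt d)} [IsProbabilityMeasure ν]
    {γ : Fin N → Measure (Pt d × Pt d)} (hγ : ∀ i, IsCoupling (μ i) ν (γ i)) :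
    ∃ π, IsPlan μ π ∧
      MOT l π ≤ ∑ i, ENNReal.ofReal (l i) * ∫⁻ p, ENNReal.ofReal (‖p.1 - p.2‖ ^ 2) ∂γ i := by
  have := fun i => (hγ i).1
  obtain ⟨ξ, hξ, hξγ⟩ := Measure.exists_gluing ν γ fun i => (hγ i).2.2
  refine ⟨ξ.map Prod.fst, ⟨Measure.isProbabilityMeasure_map (by fun_prop), fun i => ?_⟩, ?_⟩
  · rw [← (hγ i).2.1, ← hξγ i, Measure.map_map (by fun_prop) (by fun_prop),
      Measure.map_map (by fun_prop) (by fun_prop)]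
    rfl
  calc MOT l (ξ.map Prod.fst)
      ≤ ∫⁻ p, motCost l p.1 ∂ξ := lintegral_map_le _ _
    _ ≤ ∫⁻ p, ∑ i, ENNReal.ofReal (l i) * ENNReal.ofReal (‖p.1 i - p.2‖ ^ 2) ∂ξ :=
        lintegral_mono fun p => motCost_le hl p.1 p.2
    _ = _ := by
        rw [lintegral_finsetSum _ fun i _ => by fun_prop]
        refine Finset.sum_congr rfl fun i _ => ?_
        rw [lintegral_const_mul' _ _ ENNReal.ofReal_ne_top, ← hξγ i,
          lintegral_map (by fun_prop) (by fun_prop)]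

theorem MOT_le_Psi (hl : InSimplex l) {pihat : Measure (Fin N → Pt d)}
    (hπopt : ∀ π, IsPlan μ π → MOT l pihat ≤ MOT l π)
    (ν : Measure (Pt d)) [IsProbabilityMeasure ν] : MOT l pihat ≤ Psi l μ ν := by
  refine ENNReal.le_of_forall_pos_le_add fun ε hε hΨ => ?_
  have hfinite : ∀ i, W2sq (μ i) ν ≠ ⊤ := fun i htop => by
    have := ENNReal.sum_lt_top.1 hΨ i (Finset.mem_univ i)
    simp [htop, ENNReal.mul_top, (hl.1 i).not_ge] at this
  choose γ hγ hγcost using fun i => exists_isCoupling_lintegral_lt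
    (ENNReal.lt_add_right (hfinite i) (b := ε) (by simpa using hε.ne'))
  obtain ⟨π, hπ, hMOT⟩ := exists_isPlan_MOT_le hl hγ
  have hweights : ∑ i, ENNReal.ofReal (l i) = 1 := by
    rw [← ENNReal.ofReal_sum_of_nonneg fun i _ => (hl.1 i).le, hl.2, ENNReal.ofReal_one]
  calc MOT l pihat ≤ MOT l π := hπopt π hπ
    _ ≤ ∑ i, ENNReal.ofReal (l i) * (W2sq (μ i) ν + ε) :=
        hMOT.trans (Finset.sum_le_sum fun i _ => mul_le_mul_right (hγcost i).le _)
    _ = Psi l μ ν + ε := by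
        simp only [mul_add, Finset.sum_add_distrib, ← Finset.sum_mul, hweights, one_mul, Psi]

end Transport

theorem stmt8_general {d N : ℕ} (μ : Fin N → Measure (Pt d))
    (l : Fin N → ℝ) (hl : InSimplex l)
    (pihat : Measure (Fin N → Pt d)) (hplan : IsPlan μ pihat)
    (hπopt : ∀ π, IsPlan μ π → MOT l pihat ≤ MOT l π)
    (nuhat : Measure (Pt d)) (hν : IsProbabilityMeasure nuhat)
    (hνopt : ∀ ν : Measure (Pt d), IsProbabilityMeasure ν → Psi l μ nuhat ≤ Psi l μ ν) :
    MOT l pihat = Psi l μ nuhat := by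
  have := hplan.1
  refine le_antisymm (MOT_le_Psi hl hπopt nuhat) ?_
  exact (hνopt _ (Measure.isProbabilityMeasure_map (by fun_prop))).trans
    (Psi_map_wmean_le_MOT hl hplan)

/-- If `π̂` is an optimal MOT plan and `ν̂` is an optimal barycenter,
then `Φ(π̂) = Ψ(ν̂)`. -/
theorem stmt8 {d N : ℕ} (μ : Fin N → Measure (Pt d))
    (hμ : ∀ i, IsProbabilityMeasure (μ i) ∧ FinitelySupported (μ i))
    (l : Fin N → ℝ) (hl : InSimplex l)
    (pihat : Measure (Fin N → Pt d)) (hplan : IsPlan μ pihat)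
    (hπopt : ∀ π, IsPlan μ π → MOT l pihat ≤ MOT l π)
    (nuhat : Measure (Pt d)) (hν : IsProbabilityMeasure nuhat)
    (hνopt : ∀ ν : Measure (Pt d), IsProbabilityMeasure ν → Psi l μ nuhat ≤ Psi l μ ν) :
    MOT l pihat = Psi l μ nuhat :=
  stmt8_general μ l hl pihat hplan hπopt nuhat hν hνopt
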